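/- Let α ∈ (1,2), let f₂ := 1 − K and f₃(v) := f₂(2v), and set J_{kl} := ∫_ℝ f_k(v)·f_l(v)/|v|^{α+1} dv for k,l ∈ {2,3}. Then J₂₂, J₂₃, J₃₃ are finite, J₂₂ > 0, J₃₃ > 0, and the strict Cauchy–Schwarz inequality J₂₃² < J₂₂ · J₃₃ holds. -/

import Mathlib

/-!
Both `f₂` and `f₃` take values in `[0, 1]` and vanish near the origin, so each integrand is
dominated by a multiple of `|v| ^ (-(α + 1))` away from `0`, which is integrable since
`α + 1 > 1`. The strict inequality is strict Cauchy–Schwarz: `t f₂ - f₃` is nonzero on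
`(1/2, 1)` for every `t`, so the quadratic `t ↦ J₂₂ t² - 2 J₂₃ t + J₃₃` is positive and its
discriminant is negative.
-/

open MeasureTheory Real Set

noncomputable def K (x : ℝ) : ℝ :=
  if |x| ≤ 1 then 1
  else if |x| < 2 then (1 + Real.exp (1 / (2 - |x|) + 1 / (1 - |x|)))⁻¹
  else 0

noncomputable def f₂ (v : ℝ) : ℝ := 1 - K v

noncomputable def f₃ (v : ℝ) : ℝ := f₂ (2 * v)

lemma K_of_abs_le_one {x : ℝ} (h : |x| ≤ 1) : K x = 1 := if_pos h

lemma K_lt_one {x : ℝ} (h : 1 < |x|) : K x < 1 := by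
  rw [K, if_neg h.not_ge]
  split_ifs
  · exact inv_lt_one_of_one_lt₀ (lt_add_of_pos_right 1 (exp_pos _))
  · exact one_pos

lemma K_le_one (x : ℝ) : K x ≤ 1 := by
  rcases le_or_gt |x| 1 with h | h
  · exact (K_of_abs_le_one h).le
  · exact (K_lt_one h).le

lemma K_nonneg (x : ℝ) : 0 ≤ K x := by
  unfold K
  split_ifs <;> positivity

lemma measurable_K : Measurable K := by
  unfold K
  refine Measurable.ite (measurableSet_le (by fun_prop) measurable_const) measurable_const ?_
  exact Measurable.ite (measurableSet_lt (by fun_prop) measurable_const) (by fun_prop)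
    measurable_const

lemma measurable_f₂ : Measurable f₂ := measurable_const.sub measurable_K

lemma measurable_f₃ : Measurable f₃ := measurable_f₂.comp (measurable_const_mul 2)

lemma f₂_mem_Icc (v : ℝ) : f₂ v ∈ Icc 0 1 :=
  ⟨sub_nonneg.2 (K_le_one v), sub_le_self 1 (K_nonneg v)⟩

lemma f₂_eq_zero {v : ℝ} (h : |v| ≤ 1) : f₂ v = 0 := by
  rw [f₂, K_of_abs_le_one h, sub_self]

lemma f₂_pos {v : ℝ} (h : 1 < |v|) : 0 < f₂ v := sub_pos.2 (K_lt_one h)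

lemma f₃_mem_Icc (v : ℝ) : f₃ v ∈ Icc 0 1 := f₂_mem_Icc (2 * v)

lemma f₃_eq_zero {v : ℝ} (h : |v| ≤ 1 / 2) : f₃ v = 0 :=
  f₂_eq_zero (by rw [abs_mul, abs_two]; linarith)

lemma f₃_pos {v : ℝ} (h : 1 / 2 < |v|) : 0 < f₃ v :=
  f₂_pos (by rw [abs_mul, abs_two]; linarith)

lemma integrable_indicator_abs_rpow_neg {p a : ℝ} (hp : 1 < p) (ha : 0 < a) :
    Integrable ({v : ℝ | a < |v|}.indicator fun v => |v| ^ (-p)) := by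
  have hIoi : Integrable ((Ioi a).indicator fun y : ℝ => y ^ (-p)) :=
    (integrableOn_Ioi_rpow_of_lt (by linarith) ha).integrable_indicator measurableSet_Ioi
  convert (integrable_fun_norm_addHaar (volume : Measure ℝ)
    (f := (Ioi a).indicator fun y : ℝ => y ^ (-p))).2 (by simpa using hIoi.integrableOn) using 1
  ext v
  simp [indicator]

lemma integrable_div_abs_rpow_of_abs_le {h : ℝ → ℝ} {p a C : ℝ} (hp : 1 < p) (ha : 0 < a)
    (hm : AEStronglyMeasurable h) (hC : ∀ v, |h v| ≤ C) (h0 : ∀ v, |v| ≤ a → h v = 0) :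
    Integrable (fun v => h v / |v| ^ p) := by
  refine ((integrable_indicator_abs_rpow_neg hp ha).const_mul C).mono'
    (hm.div₀ (measurable_abs.pow_const p).aestronglyMeasurable) (.of_forall fun v => ?_)
  rcases le_or_gt |v| a with hv | hv
  · rw [h0 v hv, zero_div, norm_zero]
    exact mul_nonneg ((norm_nonneg (h 0)).trans ((norm_eq_abs _).trans_le (hC 0)))
      (indicator_nonneg (fun v _ => rpow_nonneg (abs_nonneg v) _) v)
  · have hv0 : 0 < |v| := ha.trans hv
    rw [indicator_of_mem (show v ∈ {v : ℝ | a < |v|} from hv), norm_div, norm_eq_abs,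
      norm_eq_abs, abs_of_pos (rpow_pos_of_pos hv0 p), rpow_neg hv0.le, ← div_eq_mul_inv]
    exact div_le_div_of_nonneg_right (hC v) (rpow_nonneg hv0.le p)

lemma integrable_mul_div_abs_rpow {f g : ℝ → ℝ} {p a : ℝ} (hp : 1 < p) (ha : 0 < a)
    (hf : Measurable f) (hg : Measurable g) (hf01 : ∀ v, f v ∈ Icc 0 1)
    (hg01 : ∀ v, g v ∈ Icc 0 1) (hf0 : ∀ v, |v| ≤ a → f v = 0) :
    Integrable (fun v => f v * g v / |v| ^ p) := by
  refine integrable_div_abs_rpow_of_abs_le hp ha (hf.mul hg).aestronglyMeasurable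
    (C := 1) (fun v => ?_) (fun v hv => by rw [hf0 v hv, zero_mul])
  rw [abs_of_nonneg (mul_nonneg (hf01 v).1 (hg01 v).1)]
  exact mul_le_one₀ (hf01 v).2 (hg01 v).1 (hg01 v).2

lemma not_ae_eq_zero_of_ne_zero_on_Ioo {F : ℝ → ℝ} {a b : ℝ} (hab : a < b)
    (hF : ∀ x ∈ Ioo a b, F x ≠ 0) : ¬ F =ᵐ[volume] 0 := by
  rw [Filter.EventuallyEq, ae_iff]
  refine (measure_mono (μ := volume) fun x hx => hF x hx).trans_lt' ?_ |>.ne'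
  simpa using hab

lemma integral_pos_of_not_ae_eq_zero {X : Type*} [MeasurableSpace X] {μ : Measure X}
    {F : X → ℝ} (hF : Integrable F μ) (h0 : 0 ≤ F) (hne : ¬ F =ᵐ[μ] 0) : 0 < ∫ x, F x ∂μ :=
  (integral_nonneg h0).lt_of_ne' (mt (integral_eq_zero_iff_of_nonneg h0 hF).1 hne)

theorem sq_integral_mul_div_lt {X : Type*} [MeasurableSpace X] {μ : Measure X}
    {f g w : X → ℝ} (hw : 0 ≤ w)
    (hff : Integrable (fun x => f x * f x / w x) μ)
    (hfg : Integrable (fun x => f x * g x / w x) μ)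
    (hgg : Integrable (fun x => g x * g x / w x) μ)
    (hA : ∫ x, f x * f x / w x ∂μ ≠ 0)
    (hindep : ∀ t : ℝ, ¬ (fun x => (t * f x - g x) ^ 2 / w x) =ᵐ[μ] 0) :
    (∫ x, f x * g x / w x ∂μ) ^ 2 < (∫ x, f x * f x / w x ∂μ) * ∫ x, g x * g x / w x ∂μ := by
  set A := ∫ x, f x * f x / w x ∂μ
  set B := ∫ x, f x * g x / w x ∂μ
  set C := ∫ x, g x * g x / w x ∂μ
  have hexpand : ∀ t : ℝ, (fun x => (t * f x - g x) ^ 2 / w x) = fun x =>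
      (t * t) * (f x * f x / w x) - (2 * t) * (f x * g x / w x) + g x * g x / w x := by
    intro t; ext x; ring
  have hquad : ∀ t : ℝ, 0 < A * (t * t) + (-2 * B) * t + C := by
    intro t
    have hint : Integrable (fun x => (t * f x - g x) ^ 2 / w x) μ := by
      rw [hexpand t]
      exact ((hff.const_mul (t * t)).sub (hfg.const_mul (2 * t))).add hgg
    have hval : ∫ x, (t * f x - g x) ^ 2 / w x ∂μ = A * (t * t) + (-2 * B) * t + C := by
      rw [hexpand t, integral_add (by exact (hff.const_mul _).sub (hfg.const_mul _)) hgg,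
        integral_sub (hff.const_mul _) (hfg.const_mul _), integral_const_mul,
        integral_const_mul]
      ring
    exact hval ▸ integral_pos_of_not_ae_eq_zero hint
      (fun x => div_nonneg (sq_nonneg _) (hw x)) (hindep t)
  have := discrim_lt_zero hA hquad
  rw [discrim] at this
  linarith

theorem stmt4_general (α : ℝ) (hα1 : 1 < α) :
    Integrable (fun v : ℝ => f₂ v * f₂ v / |v| ^ (α + 1)) ∧
    Integrable (fun v : ℝ => f₂ v * f₃ v / |v| ^ (α + 1)) ∧
    Integrable (fun v : ℝ => f₃ v * f₃ v / |v| ^ (α + 1)) ∧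
    0 < ∫ v : ℝ, f₂ v * f₂ v / |v| ^ (α + 1) ∧
    0 < ∫ v : ℝ, f₃ v * f₃ v / |v| ^ (α + 1) ∧
    (∫ v : ℝ, f₂ v * f₃ v / |v| ^ (α + 1)) ^ 2 <
      (∫ v : ℝ, f₂ v * f₂ v / |v| ^ (α + 1)) * ∫ v : ℝ, f₃ v * f₃ v / |v| ^ (α + 1) := by
  have hp : 1 < α + 1 := by linarith
  have hw : 0 ≤ fun v : ℝ => |v| ^ (α + 1) := fun v => rpow_nonneg (abs_nonneg v) _
  have hw_ne : ∀ v : ℝ, 0 < v → |v| ^ (α + 1) ≠ 0 := fun v hv =>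
    (rpow_pos_of_pos (abs_pos.2 hv.ne') _).ne'
  have h22 := integrable_mul_div_abs_rpow hp one_pos measurable_f₂ measurable_f₂
    f₂_mem_Icc f₂_mem_Icc fun _ => f₂_eq_zero
  have h23 := integrable_mul_div_abs_rpow hp one_pos measurable_f₂ measurable_f₃
    f₂_mem_Icc f₃_mem_Icc fun _ => f₂_eq_zero
  have h33 := integrable_mul_div_abs_rpow hp one_half_pos measurable_f₃ measurable_f₃
    f₃_mem_Icc f₃_mem_Icc fun _ => f₃_eq_zero
  have hJ22 := integral_pos_of_not_ae_eq_zero h22 (fun v => div_nonneg (mul_self_nonneg _) (hw v))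
    (not_ae_eq_zero_of_ne_zero_on_Ioo one_lt_two fun v hv =>
      have hf := (f₂_pos (lt_abs.2 (Or.inl hv.1))).ne'
      div_ne_zero (mul_ne_zero hf hf) (hw_ne v (one_pos.trans hv.1)))
  have hJ33 := integral_pos_of_not_ae_eq_zero h33 (fun v => div_nonneg (mul_self_nonneg _) (hw v))
    (not_ae_eq_zero_of_ne_zero_on_Ioo one_lt_two fun v hv =>
      have hf := (f₃_pos (lt_abs.2 (Or.inl (one_half_lt_one.trans hv.1)))).ne'
      div_ne_zero (mul_ne_zero hf hf) (hw_ne v (one_pos.trans hv.1)))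
  refine ⟨h22, h23, h33, hJ22, hJ33, sq_integral_mul_div_lt hw h22 h23 h33 hJ22.ne' fun t => ?_⟩
  refine not_ae_eq_zero_of_ne_zero_on_Ioo one_half_lt_one fun v hv => ?_
  have hv0 : 0 < v := one_half_pos.trans hv.1
  rw [f₂_eq_zero (abs_le.2 ⟨by linarith, hv.2.le⟩), mul_zero, zero_sub, neg_sq]
  exact div_ne_zero (pow_ne_zero 2 (f₃_pos (lt_abs.2 (Or.inl hv.1))).ne') (hw_ne v hv0)

/-- For `α ∈ (1,2)` the integrals `J_kl = ∫ f_k f_l / |v|^(α+1) dv`, `k,l ∈ {2,3}`, are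
finite, `J₂₂ > 0`, `J₃₃ > 0` and the strict Cauchy-Schwarz inequality
`J₂₃² < J₂₂ J₃₃` holds. -/
theorem stmt4 (α : ℝ) (hα1 : 1 < α) (hα2 : α < 2) :
    Integrable (fun v : ℝ => f₂ v * f₂ v / |v| ^ (α + 1)) ∧
    Integrable (fun v : ℝ => f₂ v * f₃ v / |v| ^ (α + 1)) ∧
    Integrable (fun v : ℝ => f₃ v * f₃ v / |v| ^ (α + 1)) ∧
    0 < ∫ v : ℝ, f₂ v * f₂ v / |v| ^ (α + 1) ∧
    0 < ∫ v : ℝ, f₃ v * f₃ v / |v| ^ (α + 1) ∧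
    (∫ v : ℝ, f₂ v * f₃ v / |v| ^ (α + 1)) ^ 2 <
      (∫ v : ℝ, f₂ v * f₂ v / |v| ^ (α + 1)) * ∫ v : ℝ, f₃ v * f₃ v / |v| ^ (α + 1) :=
  stmt4_general α hα1
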